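/- Let n ≥ 3. Let N be the normal closure in the Artin group A(Ã_{n-1}) of the single element (a_n·a_{n-1}⋯a_1 · a_n·a_{n-1}⋯a_3)·(a_{n-1}·a_{n-2}⋯a_1 · a_n·a_{n-1}⋯a_2)⁻¹ (the cycle relation). Then the quotient A(Ã_{n-1})/N is isomorphic to the Artin group A(D_n); moreover, an explicit isomorphism A(D_n) → A(Ã_{n-1})/N is given by sending the generator u_1 to the class of (a_n·a_{n-1}⋯a_3)⁻¹·a_1·(a_n·a_{n-1}⋯a_3) and the generator u_i to the class of a_i for 2 ≤ i ≤ n. -/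

import Mathlib

/-!
Put `W = a_n ⋯ a_3` and `t = W⁻¹ a_1 W`. The generators `a_2, …, a_n` form a braid chain, so
conjugation by `W` moves `a_j` to `a_{j-1}` for `j ≥ 4` and carries `a_3` to `W⁻¹ a_n W`. Hence `t`
commutes with `a_4, …, a_n` and braids with `a_3`, while the cycle relation is equivalent to `t`
commuting with `a_2`: in the quotient, `t, a_2, …, a_n` satisfy the relations of `A(D_n)`.
Conversely, with `U = u_n ⋯ u_3` the same chain identities show that `U u_1 U⁻¹, u_2, …, u_n`
satisfy the relations of `A(Ã_{n-1})` and the cycle relation in `A(D_n)`. The two substitutions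
are inverse to each other.
-/

namespace Stmt4

/-- The braid relator `x y x (y x y)⁻¹` (weight 3). -/
def braidRel {γ : Type} (x y : FreeGroup γ) : FreeGroup γ := x * y * x * (y * x * y)⁻¹

/-- The commutation relator `x y (y x)⁻¹` (weight 2). -/
def commRel {γ : Type} (x y : FreeGroup γ) : FreeGroup γ := x * y * (y * x)⁻¹

/-- Relations of the Artin group `A(Ã_{n-1})`: the generator indexed by `i : Fin n`
is `a_{i+1}`; cyclically adjacent generators braid, all other pairs commute. -/
def AtildeRels (n : ℕ) : Set (FreeGroup (Fin n)) :=
  { r | ∃ i j : Fin n,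
      ((j : ℕ) = ((i : ℕ) + 1) % n ∧ r = braidRel (.of i) (.of j)) ∨
      (i ≠ j ∧ (j : ℕ) ≠ ((i : ℕ) + 1) % n ∧ (i : ℕ) ≠ ((j : ℕ) + 1) % n ∧
        r = commRel (.of i) (.of j)) }

/-- The Artin group `A(Ã_{n-1})`. -/
abbrev Atilde (n : ℕ) : Type := PresentedGroup (AtildeRels n)

/-- The standard generator `a_i` (for `1 ≤ i ≤ n`) of `A(Ã_{n-1})`. -/
def a (n : ℕ) (i : ℕ) : Atilde n :=
  if h : 0 < n then PresentedGroup.of ⟨(i - 1) % n, Nat.mod_lt _ h⟩ else 1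

/-- The descending product `a_m · a_{m-1} ⋯ a_k` in `A(Ã_{n-1})`. -/
def dprod (n : ℕ) (k m : ℕ) : Atilde n :=
  ((List.range' k (m + 1 - k)).reverse.map (a n)).prod

/-- Relations of the Artin group `A(D_n)`: the generator indexed by `i : Fin n`
is `u_{i+1}`; the braid relation holds for the pair `{u_1, u_3}` and the pairs
`{u_i, u_{i+1}}` with `2 ≤ i ≤ n-1`, all remaining pairs commute. -/
def DnRels (n : ℕ) : Set (FreeGroup (Fin n)) :=
  { r | ∃ i j : Fin n,
      (((i : ℕ) = 0 ∧ (j : ℕ) = 2) ∧ r = braidRel (.of i) (.of j)) ∨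
      ((1 ≤ (i : ℕ) ∧ (j : ℕ) = (i : ℕ) + 1) ∧ r = braidRel (.of i) (.of j)) ∨
      ((i : ℕ) < (j : ℕ) ∧ ¬((i : ℕ) = 0 ∧ (j : ℕ) = 2) ∧
        ¬(1 ≤ (i : ℕ) ∧ (j : ℕ) = (i : ℕ) + 1) ∧ r = commRel (.of i) (.of j)) }

/-- The Artin group `A(D_n)`. -/
abbrev ArtinD (n : ℕ) : Type := PresentedGroup (DnRels n)

/-- The standard generator `u_i` (for `1 ≤ i ≤ n`) of `A(D_n)`. -/
def u (n : ℕ) (i : ℕ) : ArtinD n :=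
  if h : 0 < n then PresentedGroup.of ⟨(i - 1) % n, Nat.mod_lt _ h⟩ else 1

/-- The cycle relator
`(a_n ⋯ a_1 · a_n ⋯ a_3) · (a_{n-1} ⋯ a_1 · a_n ⋯ a_2)⁻¹` in `A(Ã_{n-1})`. -/
def cycleRelator (n : ℕ) : Atilde n :=
  (dprod n 1 n * dprod n 3 n) * (dprod n 1 (n - 1) * dprod n 2 n)⁻¹

section Braids

variable {G H : Type*} [Group G] [Group H]

def Braids (x y : G) : Prop := x * y * x = y * x * y

theorem Braids.symm {x y : G} (h : Braids x y) : Braids y x := Eq.symm h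

theorem Braids.map {x y : G} (h : Braids x y) (F : G →* H) : Braids (F x) (F y) := by
  simpa only [Braids, ← map_mul] using congrArg F h

theorem Braids.conj {x y : G} (h : Braids x y) (c : G) :
    Braids (c * x * c⁻¹) (c * y * c⁻¹) :=
  h.map (MulAut.conj c).toMonoidHom

theorem Braids.inv_mul_mul_eq {x y : G} (h : Braids x y) : y⁻¹ * x * y = x * y * x⁻¹ := by
  calc y⁻¹ * x * y = y⁻¹ * (x * y * x) * x⁻¹ := by group
    _ = x * y * x⁻¹ := by rw [h]; group

end Braids

section DescProd

variable {M N : Type*} [Monoid M] [Monoid N]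

def descProd (b : ℕ → M) (k m : ℕ) : M := ((List.range' k (m + 1 - k)).reverse.map b).prod

theorem dprod_eq_descProd (n k m : ℕ) : dprod n k m = descProd (a n) k m := rfl

theorem descProd_self (b : ℕ → M) (k : ℕ) : descProd b k k = b k := by
  simp [descProd]

theorem descProd_split (b : ℕ → M) {k j m : ℕ} (hkj : k ≤ j + 1) (hjm : j ≤ m) :
    descProd b k m = descProd b (j + 1) m * descProd b k j := by
  have : List.range' k (m + 1 - k) = List.range' k (j + 1 - k) ++ List.range' (j + 1) (m - j) := by
    have h := List.range'_append_1 (s := k) (m := j + 1 - k) (n := m - j)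
    rwa [show k + (j + 1 - k) = j + 1 by omega, show j + 1 - k + (m - j) = m + 1 - k by omega,
      eq_comm] at h
  simp [descProd, this, show m + 1 - (j + 1) = m - j by omega]

theorem descProd_succ_top (b : ℕ → M) {k m : ℕ} (h : k ≤ m + 1) :
    descProd b k (m + 1) = b (m + 1) * descProd b k m := by
  rw [descProd_split b h m.le_succ, descProd_self]

theorem descProd_eq_mul_bot (b : ℕ → M) {k m : ℕ} (h : k ≤ m) :
    descProd b k m = descProd b (k + 1) m * b k := by
  rw [descProd_split b k.le_succ h, descProd_self]

theorem descProd_succ_succ (b : ℕ → M) (k m : ℕ) :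
    descProd b (k + 1) (m + 1) = descProd (fun i => b (i + 1)) k m := by
  simp [descProd, show m + 1 + 1 - (k + 1) = m + 1 - k by omega, List.range'_succ_left,
    List.map_reverse, Function.comp_def]

theorem map_descProd (F : M →* N) (b : ℕ → M) (k m : ℕ) :
    F (descProd b k m) = descProd (fun i => F (b i)) k m := by
  simp [descProd, map_list_prod, List.map_map, Function.comp_def]

theorem descProd_congr {b b' : ℕ → M} {k m : ℕ} (h : ∀ i, k ≤ i → i ≤ m → b i = b' i) :
    descProd b k m = descProd b' k m := by
  refine congrArg List.prod (List.map_congr_left fun i hi => ?_)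
  simp only [List.mem_reverse, List.mem_range'] at hi
  obtain ⟨j, hj, rfl⟩ := hi
  exact h _ (by omega) (by omega)

theorem Commute.descProd_right {x : M} {b : ℕ → M} {k m : ℕ}
    (h : ∀ i, k ≤ i → i ≤ m → Commute x (b i)) : Commute x (descProd b k m) := by
  refine Commute.list_prod_right _ _ fun y hy => ?_
  simp only [List.mem_map, List.mem_reverse, List.mem_range'] at hy
  obtain ⟨i, ⟨j, hj, rfl⟩, rfl⟩ := hy
  exact h _ (by omega) (by omega)

end DescProd

section BraidChain

variable {G H : Type*} [Group G] [Group H]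

theorem mul_descProd_eq_descProd_mul {x : G} {b c : ℕ → G} {k m : ℕ}
    (h : ∀ j, k ≤ j → j ≤ m → x * c j = b j * x) :
    x * descProd c k m = descProd b k m * x := by
  have hconj : descProd b k m = MulAut.conj x (descProd c k m) := by
    rw [← MulEquiv.coe_toMonoidHom, map_descProd]
    refine descProd_congr fun j hkj hjm => ?_
    simp [h j hkj hjm]
  simp [hconj]

structure IsBraidChain (b : ℕ → G) (k m : ℕ) : Prop where
  braids : ∀ i, k ≤ i → i < m → Braids (b i) (b (i + 1))
  commute : ∀ i j, k ≤ i → i + 2 ≤ j → j ≤ m → Commute (b i) (b j)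

namespace IsBraidChain

variable {b : ℕ → G} {k m : ℕ}

theorem mono (h : IsBraidChain b k m) {k' m' : ℕ} (hk : k ≤ k') (hm : m' ≤ m) :
    IsBraidChain b k' m' :=
  ⟨fun i hi him => h.braids i (hk.trans hi) (by omega),
    fun i j hi hij hj => h.commute i j (hk.trans hi) hij (hj.trans hm)⟩

theorem map (h : IsBraidChain b k m) (F : G →* H) : IsBraidChain (fun i => F (b i)) k m :=
  ⟨fun i hi him => (h.braids i hi him).map F,
    fun i j hi hij hj => (h.commute i j hi hij hj).map F⟩

theorem congr (h : IsBraidChain b k m) {b' : ℕ → G} (hb : ∀ i, k ≤ i → i ≤ m → b i = b' i) :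
    IsBraidChain b' k m :=
  ⟨fun i hi him => by
      simpa only [hb i hi him.le, hb (i + 1) (by omega) him] using h.braids i hi him,
    fun i j hi hij hj => by
      simpa only [hb i hi (by omega), hb j (by omega) hj] using h.commute i j hi hij hj⟩

theorem descProd_mul (h : IsBraidChain b k m) {j : ℕ} (hkj : k ≤ j) (hjm : j < m) :
    descProd b k m * b (j + 1) = b j * descProd b k m := by
  obtain ⟨d, rfl⟩ := Nat.exists_eq_add_of_le hkj
  induction d generalizing k with
  | zero =>
    have hsplit : descProd b k m = descProd b (k + 2) m * b (k + 1) * b k := by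
      rw [descProd_eq_mul_bot b (by omega : k ≤ m), descProd_eq_mul_bot b (by omega : k + 1 ≤ m)]
    have hc : Commute (b k) (descProd b (k + 2) m) :=
      Commute.descProd_right fun i hi him => h.commute k i le_rfl hi him
    calc descProd b k m * b (k + 0 + 1)
        = descProd b (k + 2) m * (b (k + 1) * b k * b (k + 1)) := by rw [hsplit]; group
      _ = descProd b (k + 2) m * b k * (b (k + 1) * b k) := by
          rw [← h.braids k le_rfl (by omega)]; group
      _ = b (k + 0) * descProd b k m := by rw [← hc.eq, hsplit]; group
  | succ d ih =>
    have hbot : descProd b k m = descProd b (k + 1) m * b k := descProd_eq_mul_bot b (by omega)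
    have hc : Commute (b k) (b (k + (d + 1) + 1)) := h.commute _ _ le_rfl (by omega) (by omega)
    have ih' := ih (k := k + 1) (h.mono k.le_succ le_rfl) (by omega) (by omega)
    rw [show k + 1 + d = k + (d + 1) by omega] at ih'
    rw [hbot, mul_assoc, hc.eq, ← mul_assoc, ih', mul_assoc]

theorem descProd_mul_descProd (h : IsBraidChain b k (m + 1)) :
    descProd b k (m + 1) * descProd b (k + 1) (m + 1) = descProd b k m * descProd b k (m + 1) := by
  rw [descProd_succ_succ]
  exact mul_descProd_eq_descProd_mul fun j hkj hjm => h.descProd_mul hkj (by omega)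

theorem conj_bot_eq_inv_conj_top (h : IsBraidChain b k m) (hkm : k ≤ m) :
    descProd b k m * b k * (descProd b k m)⁻¹ = (descProd b k m)⁻¹ * b m * descProd b k m := by
  rcases hkm.eq_or_lt with rfl | hlt
  · simp [descProd_self]
  obtain ⟨m, rfl⟩ : ∃ m', m = m' + 1 := ⟨m - 1, by omega⟩
  set P := descProd b k (m + 1)
  have hbot : descProd b (k + 1) (m + 1) * b k = P := (descProd_eq_mul_bot b hkm).symm
  have htop : b (m + 1) * descProd b k m = P := (descProd_succ_top b hkm).symm
  have hsq : P * P = descProd b k m * P * b k := by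
    calc P * P = P * (descProd b (k + 1) (m + 1) * b k) := by rw [hbot]
      _ = descProd b k m * P * b k := by rw [← mul_assoc, h.descProd_mul_descProd]
  have hcomm : P * P * b k = b (m + 1) * (P * P) := by
    conv_rhs => rw [hsq, ← mul_assoc, ← mul_assoc, htop]
  calc P * b k * P⁻¹ = P⁻¹ * (P * P * b k) * P⁻¹ := by group
    _ = P⁻¹ * b (m + 1) * P := by rw [hcomm]; group

end IsBraidChain

end BraidChain

section Presentations

variable {G : Type*} [Group G]

/-- `g i` plays the role of the `i`-th generator, `1 ≤ i ≤ n`: the Coxeter graph of `Ã_{n-1}` is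
the chain `2 - 3 - ⋯ - n` closed into a cycle through the vertex `1`. -/
structure IsAtildeFamily (n : ℕ) (g : ℕ → G) : Prop where
  chain : IsBraidChain g 2 n
  braids_one_two : Braids (g 1) (g 2)
  braids_last_one : Braids (g n) (g 1)
  commute_one : ∀ j, 3 ≤ j → j < n → Commute (g 1) (g j)

/-- The Coxeter graph of `D_n` is the chain `2 - 3 - ⋯ - n` with the vertex `1` attached to `3`. -/
structure IsDnFamily (n : ℕ) (g : ℕ → G) : Prop where
  chain : IsBraidChain g 2 n
  braids_one_three : Braids (g 1) (g 3)
  commute_one : ∀ j, 2 ≤ j → j ≤ n → j ≠ 3 → Commute (g 1) (g j)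

theorem IsAtildeFamily.map {H : Type*} [Group H] {n : ℕ} {g : ℕ → G} (h : IsAtildeFamily n g)
    (F : G →* H) : IsAtildeFamily n (fun i => F (g i)) :=
  ⟨h.chain.map F, h.braids_one_two.map F, h.braids_last_one.map F,
    fun j hj hjn => (h.commute_one j hj hjn).map F⟩

theorem map_braidRel_eq_one_iff {γ : Type} (F : FreeGroup γ →* G) (x y : FreeGroup γ) :
    F (braidRel x y) = 1 ↔ Braids (F x) (F y) := by
  simp only [braidRel, map_mul, map_inv, mul_inv_eq_one]
  rfl

theorem map_commRel_eq_one_iff {γ : Type} (F : FreeGroup γ →* G) (x y : FreeGroup γ) :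
    F (commRel x y) = 1 ↔ Commute (F x) (F y) := by
  simp only [commRel, map_mul, map_inv, mul_inv_eq_one]
  rfl

theorem braids_of_braidRel_mem {γ : Type} {rels : Set (FreeGroup γ)} {x y : γ}
    (h : braidRel (.of x) (.of y) ∈ rels) :
    Braids (PresentedGroup.of x : PresentedGroup rels) (PresentedGroup.of y) :=
  (map_braidRel_eq_one_iff (PresentedGroup.mk rels) _ _).1 (PresentedGroup.one_of_mem h)

theorem commute_of_commRel_mem {γ : Type} {rels : Set (FreeGroup γ)} {x y : γ}
    (h : commRel (.of x) (.of y) ∈ rels) :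
    Commute (PresentedGroup.of x : PresentedGroup rels) (PresentedGroup.of y) :=
  (map_commRel_eq_one_iff (PresentedGroup.mk rels) _ _).1 (PresentedGroup.one_of_mem h)

theorem mod_eq_ite_of_le {i n : ℕ} (h : i ≤ n) : i % n = if i = n then 0 else i := by
  split_ifs with hi
  · rw [hi, Nat.mod_self]
  · exact Nat.mod_eq_of_lt (by omega)

variable {n : ℕ}

theorem a_eq_of {i : ℕ} (hi : 1 ≤ i) (hin : i ≤ n) :
    a n i = PresentedGroup.of (⟨i - 1, by omega⟩ : Fin n) := by
  simp [a, show 0 < n by omega, Nat.mod_eq_of_lt (show i - 1 < n by omega)]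

theorem u_eq_of {i : ℕ} (hi : 1 ≤ i) (hin : i ≤ n) :
    u n i = PresentedGroup.of (⟨i - 1, by omega⟩ : Fin n) := by
  simp [u, show 0 < n by omega, Nat.mod_eq_of_lt (show i - 1 < n by omega)]

theorem of_eq_a (x : Fin n) : PresentedGroup.of x = a n (x + 1) := by
  rw [a_eq_of (by omega) x.isLt]
  rfl

theorem of_eq_u (x : Fin n) : PresentedGroup.of x = u n (x + 1) := by
  rw [u_eq_of (by omega) x.isLt]
  rfl

theorem isAtildeFamily_a (hn : 3 ≤ n) : IsAtildeFamily n (a n) := by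
  have braids {i j : ℕ} (hi : 1 ≤ i) (hin : i ≤ n) (hj : 1 ≤ j) (hjn : j ≤ n)
      (hij : j - 1 = if i = n then 0 else i) : Braids (a n i) (a n j) := by
    rw [a_eq_of hi hin, a_eq_of hj hjn]
    refine braids_of_braidRel_mem ⟨_, _, Or.inl ⟨?_, rfl⟩⟩
    simpa only [Nat.sub_add_cancel hi, mod_eq_ite_of_le hin] using hij
  have commute {i j : ℕ} (hi : 1 ≤ i) (hij : i + 2 ≤ j) (hjn : j ≤ n) (hin : ¬(i = 1 ∧ j = n)) :
      Commute (a n i) (a n j) := by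
    rw [a_eq_of hi (by omega), a_eq_of (by omega) hjn]
    refine commute_of_commRel_mem
        ⟨_, _, Or.inr ⟨Fin.ne_of_val_ne (by dsimp only; omega), ?_, ?_, rfl⟩⟩ <;>
      simp only [Nat.sub_add_cancel (show 1 ≤ i by omega), Nat.sub_add_cancel (show 1 ≤ j by omega),
        mod_eq_ite_of_le (show i ≤ n by omega), mod_eq_ite_of_le hjn] <;>
      split_ifs <;> omega
  exact ⟨⟨fun i hi hin => braids (by omega) hin.le (by omega) hin (by split_ifs <;> omega),
      fun i j hi hij hjn => commute (by omega) hij hjn (by omega)⟩,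
    braids le_rfl (by omega) (by omega) (by omega) (by split_ifs <;> omega),
    braids (by omega) le_rfl le_rfl (by omega) (by simp),
    fun j hj hjn => commute le_rfl (by omega) hjn.le (by omega)⟩

theorem isDnFamily_u (hn : 3 ≤ n) : IsDnFamily n (u n) := by
  have braids {i j : ℕ} (hi : 1 ≤ i) (hjn : j ≤ n) (hij : i = 1 ∧ j = 3 ∨ 2 ≤ i ∧ j = i + 1) :
      Braids (u n i) (u n j) := by
    rw [u_eq_of hi (by omega), u_eq_of (by omega) hjn]
    rcases hij with hij | hij
    · exact braids_of_braidRel_mem ⟨_, _, Or.inl ⟨by dsimp only; omega, rfl⟩⟩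
    · exact braids_of_braidRel_mem ⟨_, _, Or.inr (Or.inl ⟨by dsimp only; omega, rfl⟩)⟩
  have commute {i j : ℕ} (hi : 1 ≤ i) (hij : i < j) (hjn : j ≤ n) (h13 : ¬(i = 1 ∧ j = 3))
      (hadj : ¬(2 ≤ i ∧ j = i + 1)) : Commute (u n i) (u n j) := by
    rw [u_eq_of hi (by omega), u_eq_of (by omega) hjn]
    exact commute_of_commRel_mem ⟨_, _, Or.inr (Or.inr ⟨by dsimp only; omega, by dsimp only; omega,
      by dsimp only; omega, rfl⟩)⟩
  exact ⟨⟨fun i hi hin => braids (by omega) hin (by omega),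
      fun i j hi hij hjn => commute (by omega) (by omega) hjn (by omega) (by omega)⟩,
    braids le_rfl hn (by omega),
    fun j hj hjn hj3 => commute le_rfl (by omega) hjn (by omega) (by omega)⟩

end Presentations

section Lifts

variable {G : Type*} [Group G] {n : ℕ} {g : ℕ → G}

theorem IsAtildeFamily.lift_eq_one (h : IsAtildeFamily n g) :
    ∀ r ∈ AtildeRels n, FreeGroup.lift (fun i : Fin n => g (i + 1)) r = 1 := by
  rintro r ⟨i, j, ⟨hj, rfl⟩ | ⟨hne, hij, hji, rfl⟩⟩
  · rw [map_braidRel_eq_one_iff]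
    simp only [FreeGroup.lift_apply_of]
    rw [mod_eq_ite_of_le (show (i : ℕ) + 1 ≤ n from i.isLt)] at hj
    split_ifs at hj with hi
    · rw [hi, hj]
      exact h.braids_last_one
    · rw [hj]
      rcases Nat.eq_zero_or_pos (i : ℕ) with hi0 | hi0
      · simpa [hi0] using h.braids_one_two
      · exact h.chain.braids _ (by omega) (by omega)
  · rw [map_commRel_eq_one_iff]
    simp only [FreeGroup.lift_apply_of]
    rw [mod_eq_ite_of_le (show (i : ℕ) + 1 ≤ n from i.isLt)] at hij
    rw [mod_eq_ite_of_le (show (j : ℕ) + 1 ≤ n from j.isLt)] at hji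
    replace hne : (i : ℕ) ≠ j := Fin.val_ne_of_ne hne
    wlog hlt : (i : ℕ) < j generalizing i j
    · exact (this j i hji hij hne.symm (by omega)).symm
    rcases Nat.eq_zero_or_pos (i : ℕ) with hi0 | hi0
    · rw [hi0]
      exact h.commute_one _ (by split_ifs at hij hji <;> omega) (by split_ifs at hij hji <;> omega)
    · exact h.chain.commute _ _ (by omega) (by split_ifs at hij <;> omega) (by omega)

theorem IsDnFamily.lift_eq_one (h : IsDnFamily n g) :
    ∀ r ∈ DnRels n, FreeGroup.lift (fun i : Fin n => g (i + 1)) r = 1 := by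
  rintro r ⟨i, j, ⟨⟨hi, hj⟩, rfl⟩ | ⟨⟨hi, hj⟩, rfl⟩ | ⟨hij, h13, hadj, rfl⟩⟩
  · rw [map_braidRel_eq_one_iff]
    simpa [hi, hj] using h.braids_one_three
  · rw [map_braidRel_eq_one_iff]
    simpa [hj] using h.chain.braids _ (by omega) (by omega)
  · rw [map_commRel_eq_one_iff]
    simp only [FreeGroup.lift_apply_of]
    rcases Nat.eq_zero_or_pos (i : ℕ) with hi0 | hi0
    · rw [hi0]
      exact h.commute_one _ (by omega) (by omega) (by omega)
    · exact h.chain.commute _ _ (by omega) (by omega) (by omega)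

namespace Atilde

def lift (g : ℕ → G) (hg : IsAtildeFamily n g) : Atilde n →* G :=
  PresentedGroup.toGroup hg.lift_eq_one

theorem lift_a (hg : IsAtildeFamily n g) {i : ℕ} (hi : 1 ≤ i) (hin : i ≤ n) :
    lift g hg (a n i) = g i := by
  rw [a_eq_of hi hin, lift, PresentedGroup.toGroup.of, Nat.sub_add_cancel hi]

theorem lift_dprod (hg : IsAtildeFamily n g) {k m : ℕ} (hk : 1 ≤ k) (hm : m ≤ n) :
    lift g hg (dprod n k m) = descProd g k m := by
  rw [dprod_eq_descProd, map_descProd]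
  exact descProd_congr fun i hki him => lift_a hg (by omega) (by omega)

theorem hom_ext {F F' : Atilde n →* G} (h : ∀ i, 1 ≤ i → i ≤ n → F (a n i) = F' (a n i)) :
    F = F' :=
  PresentedGroup.ext fun x => by simpa only [of_eq_a] using h _ (by omega) x.isLt

end Atilde

namespace ArtinD

def lift (g : ℕ → G) (hg : IsDnFamily n g) : ArtinD n →* G :=
  PresentedGroup.toGroup hg.lift_eq_one

theorem lift_u (hg : IsDnFamily n g) {i : ℕ} (hi : 1 ≤ i) (hin : i ≤ n) :
    lift g hg (u n i) = g i := by
  rw [u_eq_of hi hin, lift, PresentedGroup.toGroup.of, Nat.sub_add_cancel hi]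

theorem hom_ext {F F' : ArtinD n →* G} (h : ∀ i, 1 ≤ i → i ≤ n → F (u n i) = F' (u n i)) :
    F = F' :=
  PresentedGroup.ext fun x => by simpa only [of_eq_u] using h _ (by omega) x.isLt

end ArtinD

end Lifts

section Twist

variable {G H : Type*} [Group G] [Group H] {n : ℕ}

def twistFirst (n : ℕ) (A : ℕ → G) (i : ℕ) : G :=
  if i = 1 then (descProd A 3 n)⁻¹ * A 1 * descProd A 3 n else A i

def untwistFirst (n : ℕ) (g : ℕ → G) (i : ℕ) : G :=
  if i = 1 then descProd g 3 n * g 1 * (descProd g 3 n)⁻¹ else g i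

theorem descProd_twistFirst (A : ℕ → G) {k m : ℕ} (hk : 2 ≤ k) :
    descProd (twistFirst n A) k m = descProd A k m :=
  descProd_congr fun _ hki _ => if_neg (by omega)

theorem descProd_untwistFirst (g : ℕ → G) {k m : ℕ} (hk : 2 ≤ k) :
    descProd (untwistFirst n g) k m = descProd g k m :=
  descProd_congr fun _ hki _ => if_neg (by omega)

theorem twistFirst_untwistFirst (g : ℕ → G) : twistFirst n (untwistFirst n g) = g := by
  funext i
  by_cases hi : i = 1
  · simp only [twistFirst, untwistFirst, hi, if_true, descProd_untwistFirst g (by norm_num : 2 ≤ 3)]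
    group
  · simp [twistFirst, untwistFirst, hi]

theorem untwistFirst_twistFirst (A : ℕ → G) : untwistFirst n (twistFirst n A) = A := by
  funext i
  by_cases hi : i = 1
  · simp only [twistFirst, untwistFirst, hi, if_true, descProd_twistFirst A (by norm_num : 2 ≤ 3)]
    group
  · simp [twistFirst, untwistFirst, hi]

theorem map_twistFirst {F : G →* H} {A : ℕ → G} {B : ℕ → H}
    (hAB : ∀ i, 1 ≤ i → i ≤ n → F (A i) = B i) {i : ℕ} (hi : 1 ≤ i) (hin : i ≤ n) :
    F (twistFirst n A i) = twistFirst n B i := by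
  have hW : F (descProd A 3 n) = descProd B 3 n := by
    rw [map_descProd]
    exact descProd_congr fun j h3j hjn => hAB j (by omega) hjn
  unfold twistFirst
  split_ifs with h1
  · rw [map_mul, map_mul, map_inv, hW, hAB 1 le_rfl (by omega)]
  · exact hAB i hi hin

theorem map_untwistFirst {F : G →* H} {g : ℕ → G} {B : ℕ → H}
    (hgB : ∀ i, 1 ≤ i → i ≤ n → F (g i) = B i) {i : ℕ} (hi : 1 ≤ i) (hin : i ≤ n) :
    F (untwistFirst n g i) = untwistFirst n B i := by
  have hU : F (descProd g 3 n) = descProd B 3 n := by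
    rw [map_descProd]
    exact descProd_congr fun j h3j hjn => hgB j (by omega) hjn
  unfold untwistFirst
  split_ifs with h1
  · rw [map_mul, map_mul, map_inv, hU, hgB 1 le_rfl (by omega)]
  · exact hgB i hi hin

def CycleRelation (n : ℕ) (A : ℕ → G) : Prop :=
  descProd A 1 n * descProd A 3 n = descProd A 1 (n - 1) * descProd A 2 n

theorem IsBraidChain.cycleRelation_iff {A : ℕ → G} (hA : IsBraidChain A 2 n) (hn : 3 ≤ n) :
    CycleRelation n A ↔
      Commute ((descProd A 3 n)⁻¹ * A 1 * descProd A 3 n) (A 2) := by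
  obtain ⟨m, rfl⟩ : ∃ m, n = m + 1 := ⟨n - 1, by omega⟩
  set W := descProd A 3 (m + 1)
  set P := descProd A 2 (m + 1)
  have hP : P = W * A 2 := descProd_eq_mul_bot A (by omega)
  have hp : descProd A 2 m = P * W * P⁻¹ := eq_mul_inv_of_mul_eq hA.descProd_mul_descProd.symm
  -- after `hp` both sides of the cycle relation start with `P * W`; cancelling it leaves
  -- `t = (A 2)⁻¹ * t * A 2`
  have e1 : P * A 1 * W = (P * W) * (W⁻¹ * A 1 * W) := by group
  have e2 : P * W * P⁻¹ * A 1 * P = (P * W) * (A 2)⁻¹ * ((W⁻¹ * A 1 * W) * A 2) := by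
    rw [hP]; group
  rw [CycleRelation, Nat.add_sub_cancel, descProd_eq_mul_bot A (by omega : 1 ≤ m + 1),
    descProd_eq_mul_bot A (by omega : 1 ≤ m), one_add_one_eq_two, hp, e1, e2, mul_assoc (P * W),
    mul_left_cancel_iff, eq_inv_mul_iff_mul_eq]
  exact ⟨Eq.symm, Eq.symm⟩

end Twist

section Transfer

variable {G : Type*} [Group G] {n : ℕ}

theorem IsAtildeFamily.isDnFamily_twistFirst {A : ℕ → G} (hA : IsAtildeFamily n A)
    (hcyc : CycleRelation n A) (hn : 3 ≤ n) : IsDnFamily n (twistFirst n A) := by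
  have hW : IsBraidChain A 3 n := hA.chain.mono (by norm_num) le_rfl
  have hWconj := hW.conj_bot_eq_inv_conj_top hn
  set W := descProd A 3 n
  refine ⟨hA.chain.congr fun i hi _ => (if_neg (by omega)).symm, ?_, ?_⟩
  · obtain ⟨m, rfl⟩ : ∃ m, n = m + 1 := ⟨n - 1, by omega⟩
    set q := descProd A 3 m
    have htop : W = A (m + 1) * q := descProd_succ_top A (by omega)
    have hq : Commute (A 1) q :=
      Commute.descProd_right fun i h3i him => hA.commute_one i h3i (by omega)
    have hconj_last : q⁻¹ * A (m + 1) * q = W * A 3 * W⁻¹ := by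
      rw [hWconj, htop]; group
    have hconj_one : q⁻¹ * A 1 * q = A 1 := by
      rw [← hq.inv_right.eq]; group
    have h := hA.braids_last_one.symm.conj q⁻¹
    rw [inv_inv, hconj_one, hconj_last] at h
    have h' := h.conj W⁻¹
    rw [inv_inv, show W⁻¹ * (W * A 3 * W⁻¹) * W = A 3 by group] at h'
    simpa [twistFirst] using h'
  · intro j h2j hjn hj3
    simp only [twistFirst, if_pos, if_neg (show j ≠ 1 by omega)]
    rcases (show j = 2 ∨ 4 ≤ j by omega) with rfl | h4j
    · exact (hA.chain.cycleRelation_iff hn).1 hcyc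
    · have hs : W * A j = A (j - 1) * W := by
        simpa [Nat.sub_add_cancel (show 1 ≤ j by omega)] using
          hW.descProd_mul (j := j - 1) (by omega) (by omega)
      have hc := (Commute.conj_iff W⁻¹).2 (hA.commute_one (j - 1) (by omega) (by omega))
      rwa [inv_inv, show W⁻¹ * A (j - 1) * W = A j by rw [mul_assoc, ← hs]; group] at hc

theorem IsDnFamily.isAtildeFamily_untwistFirst {g : ℕ → G} (hg : IsDnFamily n g) (hn : 3 ≤ n) :
    IsAtildeFamily n (untwistFirst n g) := by
  have hU : IsBraidChain g 3 n := hg.chain.mono (by norm_num) le_rfl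
  have hUconj := hU.conj_bot_eq_inv_conj_top hn
  set U := descProd g 3 n
  set V := descProd g 4 n
  have hbot : U = V * g 3 := descProd_eq_mul_bot g hn
  refine ⟨hg.chain.congr fun i hi _ => (if_neg (by omega)).symm, ?_, ?_, ?_⟩
  · have hV2 : Commute (g 2) V :=
      Commute.descProd_right fun i h4i hin => hg.chain.commute 2 i le_rfl (by omega) hin
    have hconj_two : U⁻¹ * g 2 * U = g 2 * g 3 * (g 2)⁻¹ := by
      rw [← (hg.chain.braids 2 le_rfl (by omega)).inv_mul_mul_eq]
      calc U⁻¹ * g 2 * U = (g 3)⁻¹ * (V⁻¹ * (g 2 * V)) * g 3 := by rw [hbot]; group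
        _ = (g 3)⁻¹ * g 2 * g 3 := by rw [hV2.eq]; group
    have hconj_one : g 2 * g 1 * (g 2)⁻¹ = g 1 := by
      rw [← (hg.commute_one 2 le_rfl (by omega) (by omega)).eq]; group
    have h := hg.braids_one_three.conj (g 2)
    rw [hconj_one, ← hconj_two] at h
    have h' := h.conj U
    rw [show U * (U⁻¹ * g 2 * U) * U⁻¹ = g 2 by group] at h'
    simpa [untwistFirst] using h'
  · have hV1 : Commute (g 1) V :=
      Commute.descProd_right fun i h4i hin => hg.commute_one i (by omega) hin (by omega)
    have hconj_three : V * g 3 * V⁻¹ = U⁻¹ * g n * U := by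
      rw [← hUconj, hbot]; group
    have hconj_one : V * g 1 * V⁻¹ = g 1 := by
      rw [← hV1.eq]; group
    have h := hg.braids_one_three.symm.conj V
    rw [hconj_three, hconj_one] at h
    have h' := h.conj U
    rw [show U * (U⁻¹ * g n * U) * U⁻¹ = g n by group] at h'
    simpa [untwistFirst, show n ≠ 1 by omega] using h'
  · intro j h3j hjn
    simp only [untwistFirst, if_pos, if_neg (show j ≠ 1 by omega)]
    have hs : U * g (j + 1) = g j * U := hU.descProd_mul h3j hjn
    have hc := (Commute.conj_iff U).2 (hg.commute_one (j + 1) (by omega) hjn (by omega))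
    rwa [show U * g (j + 1) * U⁻¹ = g j by rw [hs]; group] at hc

theorem IsDnFamily.cycleRelation_untwistFirst {g : ℕ → G} (hg : IsDnFamily n g) (hn : 3 ≤ n) :
    CycleRelation n (untwistFirst n g) := by
  rw [(hg.isAtildeFamily_untwistFirst hn).chain.cycleRelation_iff hn,
    descProd_untwistFirst g (by norm_num)]
  convert hg.commute_one 2 le_rfl (by omega) (by norm_num) using 1
  · simp only [untwistFirst, if_pos]
    group
  · rfl

end Transfer

section Isomorphism

variable {G : Type*} [Group G] {n : ℕ}

theorem cycleRelation_of_map_cycleRelator (F : Atilde n →* G) (h : F (cycleRelator n) = 1) :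
    CycleRelation n (fun i => F (a n i)) := by
  rw [CycleRelation]
  simpa only [cycleRelator, map_mul, map_inv, mul_inv_eq_one, dprod_eq_descProd, map_descProd]
    using h

theorem Atilde.lift_cycleRelator {g : ℕ → G} (hg : IsAtildeFamily n g) (hc : CycleRelation n g) :
    Atilde.lift g hg (cycleRelator n) = 1 := by
  rw [cycleRelator, map_mul, map_inv, mul_inv_eq_one, map_mul, map_mul,
    Atilde.lift_dprod hg le_rfl le_rfl, Atilde.lift_dprod hg (by norm_num) le_rfl,
    Atilde.lift_dprod hg le_rfl (Nat.sub_le n 1), Atilde.lift_dprod hg (by norm_num) le_rfl]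
  exact hc

abbrev CycleQuotient (n : ℕ) : Type := Atilde n ⧸ Subgroup.normalClosure {cycleRelator n}

variable (hn : 3 ≤ n)

def toCycleQuotient : ArtinD n →* CycleQuotient n :=
  ArtinD.lift (twistFirst n fun i => QuotientGroup.mk' _ (a n i))
    (((isAtildeFamily_a hn).map _).isDnFamily_twistFirst
      (cycleRelation_of_map_cycleRelator _
        ((QuotientGroup.eq_one_iff _).2 (Subgroup.subset_normalClosure rfl))) hn)

def ofCycleQuotient : CycleQuotient n →* ArtinD n :=
  QuotientGroup.lift _ (Atilde.lift _ ((isDnFamily_u hn).isAtildeFamily_untwistFirst hn))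
    (Subgroup.normalClosure_le_normal (Set.singleton_subset_iff.2
      (Atilde.lift_cycleRelator _ ((isDnFamily_u hn).cycleRelation_untwistFirst hn))))

theorem toCycleQuotient_u {i : ℕ} (hi : 1 ≤ i) (hin : i ≤ n) :
    toCycleQuotient hn (u n i) = twistFirst n (fun i => QuotientGroup.mk' _ (a n i)) i :=
  ArtinD.lift_u _ hi hin

theorem ofCycleQuotient_mk {i : ℕ} (hi : 1 ≤ i) (hin : i ≤ n) :
    ofCycleQuotient hn (QuotientGroup.mk' _ (a n i)) = untwistFirst n (u n) i :=
  Atilde.lift_a ((isDnFamily_u hn).isAtildeFamily_untwistFirst hn) hi hin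

theorem ofCycleQuotient_comp_toCycleQuotient :
    (ofCycleQuotient hn).comp (toCycleQuotient hn) = MonoidHom.id _ :=
  ArtinD.hom_ext fun i hi hin => by
    rw [MonoidHom.comp_apply, toCycleQuotient_u hn hi hin,
      map_twistFirst (fun j hj hjn => ofCycleQuotient_mk hn hj hjn) hi hin,
      twistFirst_untwistFirst, MonoidHom.id_apply]

theorem toCycleQuotient_comp_ofCycleQuotient :
    (toCycleQuotient hn).comp (ofCycleQuotient hn) = MonoidHom.id _ :=
  QuotientGroup.monoidHom_ext _ <| Atilde.hom_ext fun i hi hin => by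
    rw [MonoidHom.comp_apply, MonoidHom.comp_apply, ofCycleQuotient_mk hn hi hin,
      map_untwistFirst (fun j hj hjn => toCycleQuotient_u hn hj hjn) hi hin,
      untwistFirst_twistFirst, MonoidHom.comp_apply, MonoidHom.id_apply]

end Isomorphism

/-- For `n ≥ 3`, the quotient of `A(Ã_{n-1})` by the normal
closure of the cycle relator is isomorphic to `A(D_n)`, via the isomorphism
sending `u_1` to the class of `(a_n ⋯ a_3)⁻¹ · a_1 · (a_n ⋯ a_3)` and `u_i` to
the class of `a_i` for `2 ≤ i ≤ n`. -/
theorem quotient_by_cycle_relation_iso_ArtinD (n : ℕ) (hn : 3 ≤ n) :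
    ∃ φ : ArtinD n ≃* (Atilde n ⧸ Subgroup.normalClosure {cycleRelator n}),
      φ (u n 1) = QuotientGroup.mk ((dprod n 3 n)⁻¹ * a n 1 * dprod n 3 n) ∧
      ∀ i : ℕ, 2 ≤ i → i ≤ n → φ (u n i) = QuotientGroup.mk (a n i) := by
  refine ⟨MonoidHom.toMulEquiv _ _ (ofCycleQuotient_comp_toCycleQuotient hn)
    (toCycleQuotient_comp_ofCycleQuotient hn), ?_, fun i h2i hin => ?_⟩
  · rw [MonoidHom.toMulEquiv_apply, toCycleQuotient_u hn le_rfl (by omega),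
      ← QuotientGroup.mk'_apply, map_mul, map_mul, map_inv, dprod_eq_descProd, map_descProd]
    exact if_pos rfl
  · rw [MonoidHom.toMulEquiv_apply, toCycleQuotient_u hn (by omega) hin]
    exact if_neg (by omega)

end Stmt4
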